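/- If G is a graph in W₂ and S is an independent set of G with |S| < α(G), then the localization G_S is again in W₂. -/

import Mathlib

open Finset

section EdgeIdealPaper

variable {V : Type*} [Fintype V] [DecidableEq V]

/-- `S` is an independent set of vertices in `G`. -/
def IsIndep (G : SimpleGraph V) (S : Finset V) : Prop :=
  ∀ u ∈ S, ∀ v ∈ S, ¬ G.Adj u v

/-- `S` is a maximal independent set of the induced subgraph of `G` on `A`. -/
def IsMaxIndepIn (G : SimpleGraph V) (A S : Finset V) : Prop :=
  S ⊆ A ∧ IsIndep G S ∧ ∀ v ∈ A, v ∉ S → ¬ IsIndep G (insert v S)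

open scoped Classical in
/-- The independence number of the induced subgraph of `G` on `A`. -/
noncomputable def alphaIn (G : SimpleGraph V) (A : Finset V) : ℕ :=
  ((A.powerset).filter (fun S => IsIndep G S)).sup Finset.card

/-- The induced subgraph of `G` on `A` is well-covered. -/
def WellCoveredIn (G : SimpleGraph V) (A : Finset V) : Prop :=
  ∀ S, IsMaxIndepIn G A S → S.card = alphaIn G A

/-- The induced subgraph of `G` on `A` is in the class `W₂`. -/
def W2In (G : SimpleGraph V) (A : Finset V) : Prop :=
  WellCoveredIn G A ∧
    ∀ x ∈ A, WellCoveredIn G (A.erase x) ∧ alphaIn G (A.erase x) = alphaIn G A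

open scoped Classical in
/-- The neighborhood of a vertex `a` in `G`, as a `Finset`. -/
noncomputable def nbr (G : SimpleGraph V) (a : V) : Finset V :=
  univ.filter (fun v => G.Adj a v)

open scoped Classical in
/-- The neighborhood `N_G(S)` of a set `S` of vertices: vertices outside `S`
adjacent to some vertex of `S`. -/
noncomputable def nbrSet (G : SimpleGraph V) (S : Finset V) : Finset V :=
  univ.filter (fun v => v ∉ S ∧ ∃ u ∈ S, G.Adj u v)

/-- The vertex set of the localization `G_S = G \ (S ∪ N_G(S))`. -/
noncomputable def loc (G : SimpleGraph V) (S : Finset V) : Finset V :=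
  univ \ (S ∪ nbrSet G S)

/-- The vertex set of `G_{ab} = G \ (N_G(a) ∪ N_G(b))`. -/
noncomputable def locE (G : SimpleGraph V) (a b : V) : Finset V :=
  univ \ (nbr G a ∪ nbr G b)

/-- The induced subgraph of `G` on `A` has no isolated vertices. -/
def NoIsolatedIn (G : SimpleGraph V) (A : Finset V) : Prop :=
  ∀ v ∈ A, ∃ u ∈ A, G.Adj v u

open scoped Classical in
/-- The reduced Euler characteristic `∑_{F} (-1)^{|F|-1}` (the empty face
contributing `-1`) of the independence complex of the induced subgraph of `G` on `A`. -/
noncomputable def indEuler (G : SimpleGraph V) (A : Finset V) : ℤ :=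
  -∑ S ∈ (A.powerset).filter (fun S => IsIndep G S), (-1 : ℤ) ^ S.card

end EdgeIdealPaper

/-! Every maximal independent set of `G_S` extends by `S` to a maximal independent set of `G`,
so well-coveredness passes to `G_S`, with `α(G_S) = α(G) - |S|`. Deleting a vertex `x` of `G_S`
commutes with localizing at `S`, so the same argument applied to `G \ x` gives the `W₂`
condition at `x`. -/

section Localization

variable {V : Type*} {G : SimpleGraph V} {A S T M : Finset V}

lemma IsIndep.mono (hST : T ⊆ S) (hS : IsIndep G S) : IsIndep G T :=
  fun u hu v hv => hS u (hST hu) v (hST hv)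

lemma card_le_alphaIn (hSA : S ⊆ A) (hS : IsIndep G S) : S.card ≤ alphaIn G A := by
  classical
  exact Finset.le_sup (mem_filter.mpr ⟨mem_powerset.mpr hSA, hS⟩)

lemma exists_isIndep_card_eq_alphaIn (G : SimpleGraph V) (A : Finset V) :
    ∃ M ⊆ A, IsIndep G M ∧ M.card = alphaIn G A := by
  classical
  have hne : ((A.powerset).filter (fun S => IsIndep G S)).Nonempty :=
    ⟨∅, mem_filter.mpr ⟨empty_mem_powerset A, by simp [IsIndep]⟩⟩
  obtain ⟨M, hM, hMcard⟩ := exists_mem_eq_sup _ hne Finset.card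
  rw [mem_filter, mem_powerset] at hM
  exact ⟨M, hM.1, hM.2, hMcard.symm⟩

variable [DecidableEq V]

lemma isMaxIndepIn_of_card_eq_alphaIn (hMA : M ⊆ A) (hM : IsIndep G M)
    (hcard : M.card = alphaIn G A) : IsMaxIndepIn G A M := by
  refine ⟨hMA, hM, fun v hvA hvM hv => ?_⟩
  have := card_le_alphaIn (insert_subset hvA hMA) hv
  rw [card_insert_of_notMem hvM] at this
  omega

variable [Fintype V]

lemma mem_sdiff_union_nbrSet {t : V} :
    t ∈ A \ (S ∪ nbrSet G S) ↔ t ∈ A ∧ t ∉ S ∧ ∀ u ∈ S, ¬ G.Adj u t := by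
  simp only [mem_sdiff, mem_union, nbrSet, mem_filter, mem_univ, true_and, not_or, not_and,
    not_exists]
  tauto

lemma IsIndep.union_of_subset_sdiff (hS : IsIndep G S) (hTA : T ⊆ A \ (S ∪ nbrSet G S))
    (hT : IsIndep G T) : IsIndep G (S ∪ T) := by
  have hST : ∀ u ∈ S, ∀ v ∈ T, ¬ G.Adj u v := fun u hu v hv =>
    (mem_sdiff_union_nbrSet.mp (hTA hv)).2.2 u hu
  intro u hu v hv hadj
  rcases mem_union.mp hu with hu | hu <;> rcases mem_union.mp hv with hv | hv
  · exact hS u hu v hv hadj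
  · exact hST u hu v hv hadj
  · exact hST v hv u hu hadj.symm
  · exact hT u hu v hv hadj

lemma IsMaxIndepIn.union_of_sdiff (hSA : S ⊆ A) (hS : IsIndep G S)
    (hT : IsMaxIndepIn G (A \ (S ∪ nbrSet G S)) T) : IsMaxIndepIn G A (S ∪ T) := by
  obtain ⟨hTA, hTindep, hTmax⟩ := hT
  refine ⟨union_subset hSA (hTA.trans sdiff_subset), hS.union_of_subset_sdiff hTA hTindep,
    fun v hvA hvST hv => ?_⟩
  rw [mem_union, not_or] at hvST
  have hvS : ∀ u ∈ S, ¬ G.Adj u v := fun u hu hadj =>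
    hv v (mem_insert_self _ _) u (mem_insert_of_mem (mem_union_left _ hu)) hadj.symm
  exact hTmax v (mem_sdiff_union_nbrSet.mpr ⟨hvA, hvST.1, hvS⟩) hvST.2
    (hv.mono (insert_subset_insert _ subset_union_right))

lemma card_union_of_subset_sdiff (hTA : T ⊆ A \ (S ∪ nbrSet G S)) :
    (S ∪ T).card = S.card + T.card :=
  card_union_of_disjoint (disjoint_left.mpr fun _ huS huT =>
    (mem_sdiff_union_nbrSet.mp (hTA huT)).2.1 huS)

lemma WellCoveredIn.card_add_card_of_isMaxIndepIn_sdiff (hwc : WellCoveredIn G A)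
    (hSA : S ⊆ A) (hS : IsIndep G S) (hT : IsMaxIndepIn G (A \ (S ∪ nbrSet G S)) T) :
    S.card + T.card = alphaIn G A := by
  rw [← card_union_of_subset_sdiff hT.1]
  exact hwc _ (hT.union_of_sdiff hSA hS)

lemma WellCoveredIn.card_add_alphaIn_sdiff (hwc : WellCoveredIn G A) (hSA : S ⊆ A)
    (hS : IsIndep G S) : S.card + alphaIn G (A \ (S ∪ nbrSet G S)) = alphaIn G A := by
  obtain ⟨M, hMA, hM, hMcard⟩ := exists_isIndep_card_eq_alphaIn G (A \ (S ∪ nbrSet G S))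
  rw [← hMcard]
  exact hwc.card_add_card_of_isMaxIndepIn_sdiff hSA hS
    (isMaxIndepIn_of_card_eq_alphaIn hMA hM hMcard)

lemma WellCoveredIn.sdiff_union_nbrSet (hwc : WellCoveredIn G A) (hSA : S ⊆ A)
    (hS : IsIndep G S) : WellCoveredIn G (A \ (S ∪ nbrSet G S)) := fun T hT => by
  have h₁ := hwc.card_add_card_of_isMaxIndepIn_sdiff hSA hS hT
  have h₂ := hwc.card_add_alphaIn_sdiff hSA hS
  omega

end Localization

section EdgeIdealPaper

variable {V : Type*} [Fintype V] [DecidableEq V]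

theorem stmt6_general (G : SimpleGraph V) (hw2 : W2In G Finset.univ)
    (S : Finset V) (hS : IsIndep G S) :
    W2In G (loc G S) := by
  obtain ⟨hwc, hdel⟩ := hw2
  refine ⟨hwc.sdiff_union_nbrSet (subset_univ S) hS, fun x hx => ?_⟩
  obtain ⟨hwcx, halphax⟩ := hdel x (mem_univ x)
  have hSx : S ⊆ univ.erase x := fun s hs =>
    mem_erase.mpr ⟨fun h => (mem_sdiff_union_nbrSet.mp hx).2.1 (h ▸ hs), mem_univ s⟩
  have hloc := hwc.card_add_alphaIn_sdiff (subset_univ S) hS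
  have hlocx := hwcx.card_add_alphaIn_sdiff hSx hS
  rw [loc, ← erase_sdiff_comm]
  refine ⟨hwcx.sdiff_union_nbrSet hSx hS, ?_⟩
  omega

/-- If `G ∈ W₂` and `S` is an independent set with `|S| < α(G)`, then `G_S ∈ W₂`. -/
theorem stmt6 (G : SimpleGraph V) (hw2 : W2In G Finset.univ)
    (S : Finset V) (hS : IsIndep G S) (hcard : S.card < alphaIn G Finset.univ) :
    W2In G (loc G S) :=
  stmt6_general G hw2 S hS

end EdgeIdealPaper
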